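/- A unital single-qubit channel with Bloch matrix Λ = diag(λ₁,λ₂,λ₃) is entanglement-breaking (measure-and-prepare) if and only if |λ₁| + |λ₂| + |λ₃| ≤ 1. -/

import Mathlib

/-!
Write the Choi matrix as `¼(𝟙⊗𝟙 + Σᵢ λᵢ σᵢᵀ⊗σᵢ)`. The Bell vectors are common eigenvectors of
the three `σᵢᵀ⊗σᵢ`, so positivity of the Choi matrix amounts to `1 + ε₁λ₁ + ε₂λ₂ + ε₃λ₃ ≥ 0`
for the four sign patterns with `ε₁ε₂ε₃ = 1`. A separable matrix stays positive under partial
transposition (Peres), which maps the Choi matrix of `(λ₁, λ₂, λ₃)` to that of `(λ₁, -λ₂, λ₃)`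
and so yields the four remaining sign patterns; together they say `Σ|λᵢ| ≤ 1`.

Conversely, for a Hermitian involution `P` both `𝟙 ± P` are positive, and
`𝟙⊗𝟙 ± Pᵀ⊗P = ½[(𝟙+Pᵀ)⊗(𝟙±P) + (𝟙-Pᵀ)⊗(𝟙∓P)]` is separable. If `Σ|λᵢ| ≤ 1`, the Choi matrix
is a nonnegative combination of these and of `𝟙⊗𝟙`.
-/


open Matrix Complex Kronecker
open scoped ComplexOrder

/-- The Pauli matrix `σ_x`. -/
def pauliX : Matrix (Fin 2) (Fin 2) ℂ := !![0, 1; 1, 0]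

/-- The Pauli matrix `σ_y`. -/
def pauliY : Matrix (Fin 2) (Fin 2) ℂ := !![0, -I; I, 0]

/-- The Pauli matrix `σ_z`. -/
def pauliZ : Matrix (Fin 2) (Fin 2) ℂ := !![1, 0; 0, -1]

/-- The Choi matrix of a unital single-qubit channel with Bloch matrix
`Λ = diag(λ₁,λ₂,λ₃)`: `ρ_M = ¼[𝟙⊗𝟙 + Σᵢ λᵢ σᵢᵀ⊗σᵢ]`. -/
noncomputable def choiUnital (l1 l2 l3 : ℝ) :
    Matrix (Fin 2 × Fin 2) (Fin 2 × Fin 2) ℂ :=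
  (1 / 4 : ℂ) • ((1 : Matrix (Fin 2) (Fin 2) ℂ) ⊗ₖ (1 : Matrix (Fin 2) (Fin 2) ℂ)
    + (l1 : ℂ) • (pauliXᵀ ⊗ₖ pauliX)
    + (l2 : ℂ) • (pauliYᵀ ⊗ₖ pauliY)
    + (l3 : ℂ) • (pauliZᵀ ⊗ₖ pauliZ))

/-- Separability of a two-qubit matrix: a convex combination of tensor products
of positive semidefinite matrices. -/
def SeparableState (ρ : Matrix (Fin 2 × Fin 2) (Fin 2 × Fin 2) ℂ) : Prop :=
  ∃ (n : ℕ) (w : Fin n → ℝ) (A B : Fin n → Matrix (Fin 2) (Fin 2) ℂ),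
    (∀ i, 0 ≤ w i) ∧ (∀ i, (A i).PosSemidef) ∧ (∀ i, (B i).PosSemidef) ∧
    ρ = ∑ i, (w i : ℂ) • (A i ⊗ₖ B i)

namespace Matrix

variable {l m n p R : Type*}

theorem neg_kronecker [Ring R] (A : Matrix l m R) (B : Matrix n p R) :
    (-A) ⊗ₖ B = -(A ⊗ₖ B) := by
  ext; simp

theorem kronecker_neg [Ring R] (A : Matrix l m R) (B : Matrix n p R) :
    A ⊗ₖ (-B) = -(A ⊗ₖ B) := by
  ext; simp

def partialTranspose [CommSemiring R] :
    Matrix (m × n) (m × n) R →ₗ[R] Matrix (m × n) (m × n) R where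
  toFun M p q := M (p.1, q.2) (q.1, p.2)
  map_add' _ _ := rfl
  map_smul' _ _ := rfl

theorem partialTranspose_kronecker [CommSemiring R] (A : Matrix m m R) (B : Matrix n n R) :
    partialTranspose (A ⊗ₖ B) = A ⊗ₖ Bᵀ := rfl

theorem posSemidef_one_add_of_mul_self_eq_one [Fintype n] [DecidableEq n] {P : Matrix n n ℂ}
    (hP : P.IsHermitian) (hP2 : P * P = 1) : (1 + P).PosSemidef := by
  have h : 1 + P = (2⁻¹ : ℝ) • ((1 + P)ᴴ * (1 + P)) := by
    simp only [conjTranspose_add, conjTranspose_one, hP.eq, add_mul, mul_add, hP2, mul_one,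
      one_mul]
    module
  rw [h]
  exact (posSemidef_conjTranspose_mul_self _).smul (by norm_num)

theorem posSemidef_sum_smul_kronecker {ι : Type*} [Fintype m] [Fintype n] {s : Finset ι}
    {w : ι → ℝ} {A : ι → Matrix m m ℂ} {B : ι → Matrix n n ℂ} (hw : ∀ i, 0 ≤ w i)
    (hA : ∀ i, (A i).PosSemidef) (hB : ∀ i, (B i).PosSemidef) :
    (∑ i ∈ s, (w i : ℂ) • (A i ⊗ₖ B i)).PosSemidef :=
  posSemidef_sum s fun i _ => ((hA i).kronecker (hB i)).smul (Complex.zero_le_real.2 (hw i))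

end Matrix

open Matrix

theorem pauliX_transpose : pauliXᵀ = pauliX := by
  ext i j; fin_cases i <;> fin_cases j <;> rfl

theorem pauliY_transpose : pauliYᵀ = -pauliY := by
  ext i j; fin_cases i <;> fin_cases j <;> simp [pauliY]

theorem pauliZ_transpose : pauliZᵀ = pauliZ := by
  ext i j; fin_cases i <;> fin_cases j <;> rfl

theorem pauliX_isHermitian : pauliX.IsHermitian := by
  ext i j; fin_cases i <;> fin_cases j <;> simp [pauliX]

theorem pauliY_isHermitian : pauliY.IsHermitian := by
  ext i j; fin_cases i <;> fin_cases j <;> simp [pauliY]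

theorem pauliZ_isHermitian : pauliZ.IsHermitian := by
  ext i j; fin_cases i <;> fin_cases j <;> simp [pauliZ]

theorem pauliX_mul_self : pauliX * pauliX = 1 := by
  ext i j; fin_cases i <;> fin_cases j <;> simp [pauliX, mul_apply]

theorem pauliY_mul_self : pauliY * pauliY = 1 := by
  ext i j; fin_cases i <;> fin_cases j <;> simp [pauliY, mul_apply]

theorem pauliZ_mul_self : pauliZ * pauliZ = 1 := by
  ext i j; fin_cases i <;> fin_cases j <;> simp [pauliZ, mul_apply]

namespace SeparableState

variable {ρ σ : Matrix (Fin 2 × Fin 2) (Fin 2 × Fin 2) ℂ}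

theorem posSemidef (h : SeparableState ρ) : ρ.PosSemidef := by
  obtain ⟨n, w, A, B, hw, hA, hB, rfl⟩ := h
  exact posSemidef_sum_smul_kronecker hw hA hB

theorem posSemidef_partialTranspose (h : SeparableState ρ) :
    (partialTranspose ρ).PosSemidef := by
  obtain ⟨n, w, A, B, hw, hA, hB, rfl⟩ := h
  simp only [map_sum, map_smul, partialTranspose_kronecker]
  exact posSemidef_sum_smul_kronecker hw hA fun i => (hB i).transpose

theorem add (hρ : SeparableState ρ) (hσ : SeparableState σ) : SeparableState (ρ + σ) := by
  obtain ⟨n, w, A, B, hw, hA, hB, rfl⟩ := hρ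
  obtain ⟨n', w', A', B', hw', hA', hB', rfl⟩ := hσ
  refine ⟨n + n', Fin.append w w', Fin.append A A', Fin.append B B', ?_, ?_, ?_, ?_⟩
  · exact Fin.addCases (by simpa using hw) (by simpa using hw')
  · exact Fin.addCases (by simpa using hA) (by simpa using hA')
  · exact Fin.addCases (by simpa using hB) (by simpa using hB')
  · simp [Fin.sum_univ_add]

theorem smul {c : ℝ} (hc : 0 ≤ c) (h : SeparableState ρ) : SeparableState ((c : ℂ) • ρ) := by
  obtain ⟨n, w, A, B, hw, hA, hB, rfl⟩ := h
  refine ⟨n, fun i => c * w i, A, B, fun i => mul_nonneg hc (hw i), hA, hB, ?_⟩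
  simp only [Finset.smul_sum, smul_smul, Complex.ofReal_mul]

theorem kronecker {A B : Matrix (Fin 2) (Fin 2) ℂ} (hA : A.PosSemidef) (hB : B.PosSemidef) :
    SeparableState (A ⊗ₖ B) :=
  ⟨1, 1, fun _ => A, fun _ => B, fun _ => zero_le_one, fun _ => hA, fun _ => hB, by simp⟩

end SeparableState

theorem separableState_one_kronecker_one_add_kronecker {A B : Matrix (Fin 2) (Fin 2) ℂ}
    (hA : A.IsHermitian) (hA2 : A * A = 1) (hB : B.IsHermitian) (hB2 : B * B = 1) :
    SeparableState (1 ⊗ₖ 1 + A ⊗ₖ B) := by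
  have hnA : (-A) * (-A) = 1 := by rw [neg_mul_neg, hA2]
  have hnB : (-B) * (-B) = 1 := by rw [neg_mul_neg, hB2]
  have hdecomp : 1 ⊗ₖ 1 + A ⊗ₖ B =
      ((1 / 2 : ℝ) : ℂ) • ((1 + A) ⊗ₖ (1 + B) + (1 + -A) ⊗ₖ (1 + -B)) := by
    simp only [add_kronecker, kronecker_add, neg_kronecker, kronecker_neg]
    push_cast
    module
  rw [hdecomp]
  exact .smul (by norm_num) <| .add
    (.kronecker (posSemidef_one_add_of_mul_self_eq_one hA hA2)
      (posSemidef_one_add_of_mul_self_eq_one hB hB2))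
    (.kronecker (posSemidef_one_add_of_mul_self_eq_one hA.neg hnA)
      (posSemidef_one_add_of_mul_self_eq_one hB.neg hnB))

theorem separableState_smul_one_add_smul_kronecker {A B : Matrix (Fin 2) (Fin 2) ℂ}
    (hA : A.IsHermitian) (hA2 : A * A = 1) (hB : B.IsHermitian) (hB2 : B * B = 1) {a t : ℝ}
    (h : |t| ≤ a) : SeparableState ((a : ℂ) • (1 ⊗ₖ 1) + (t : ℂ) • (A ⊗ₖ B)) := by
  have hnB : (-B) * (-B) = 1 := by rw [neg_mul_neg, hB2]
  have hdecomp : (a : ℂ) • (1 ⊗ₖ 1) + (t : ℂ) • (A ⊗ₖ B) =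
      (((a + t) / 2 : ℝ) : ℂ) • (1 ⊗ₖ 1 + A ⊗ₖ B) +
        (((a - t) / 2 : ℝ) : ℂ) • (1 ⊗ₖ 1 + A ⊗ₖ (-B)) := by
    rw [kronecker_neg]
    push_cast
    module
  rw [hdecomp]
  obtain ⟨h₁, h₂⟩ := abs_le.1 h
  exact .add
    (.smul (by linarith) (separableState_one_kronecker_one_add_kronecker hA hA2 hB hB2))
    (.smul (by linarith) (separableState_one_kronecker_one_add_kronecker hA hA2 hB.neg hnB))

theorem separableState_choiUnital {l1 l2 l3 : ℝ} (h : |l1| + |l2| + |l3| ≤ 1) :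
    SeparableState (choiUnital l1 l2 l3) := by
  have pauli_term (P : Matrix (Fin 2) (Fin 2) ℂ) (hP : P.IsHermitian) (hP2 : P * P = 1)
      (l : ℝ) : SeparableState (((|l| : ℝ) : ℂ) • (1 ⊗ₖ 1) + (l : ℂ) • (Pᵀ ⊗ₖ P)) :=
    separableState_smul_one_add_smul_kronecker hP.transpose
      (by rw [← transpose_mul, hP2, transpose_one]) hP hP2 le_rfl
  have hdecomp : choiUnital l1 l2 l3 = ((1 / 4 : ℝ) : ℂ) •
      (((1 - (|l1| + |l2| + |l3|) : ℝ) : ℂ) • (1 ⊗ₖ 1)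
        + (((|l1| : ℝ) : ℂ) • (1 ⊗ₖ 1) + (l1 : ℂ) • (pauliXᵀ ⊗ₖ pauliX))
        + (((|l2| : ℝ) : ℂ) • (1 ⊗ₖ 1) + (l2 : ℂ) • (pauliYᵀ ⊗ₖ pauliY))
        + (((|l3| : ℝ) : ℂ) • (1 ⊗ₖ 1) + (l3 : ℂ) • (pauliZᵀ ⊗ₖ pauliZ))) := by
    rw [choiUnital]
    push_cast
    module
  rw [hdecomp]
  refine .smul (by norm_num) (.add (.add (.add ?_ ?_) ?_) ?_)
  · exact .smul (by linarith) (.kronecker .one .one)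
  · exact pauli_term _ pauliX_isHermitian pauliX_mul_self l1
  · exact pauli_term _ pauliY_isHermitian pauliY_mul_self l2
  · exact pauli_term _ pauliZ_isHermitian pauliZ_mul_self l3

theorem partialTranspose_choiUnital (l1 l2 l3 : ℝ) :
    partialTranspose (choiUnital l1 l2 l3) = choiUnital l1 (-l2) l3 := by
  simp only [choiUnital, map_add, map_smul, map_neg, partialTranspose_kronecker, transpose_one,
    pauliX_transpose, pauliY_transpose, pauliZ_transpose, neg_kronecker, kronecker_neg]
  push_cast
  module

theorem choiUnital_posSemidef_bounds {l1 l2 l3 : ℝ} (h : (choiUnital l1 l2 l3).PosSemidef) :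
    0 ≤ 1 + l1 + l2 + l3 ∧ 0 ≤ 1 - l1 - l2 + l3 ∧ 0 ≤ 1 + l1 - l2 - l3 ∧
      0 ≤ 1 - l1 + l2 - l3 := by
  have bell (M : Matrix (Fin 2) (Fin 2) ℂ) (r : ℝ) (hM : star (fun p => M p.1 p.2) ⬝ᵥ
      (choiUnital l1 l2 l3 *ᵥ fun p => M p.1 p.2) = (r / 2 : ℝ)) : 0 ≤ r := by
    have := h.dotProduct_mulVec_nonneg fun p => M p.1 p.2
    rw [hM, Complex.zero_le_real] at this
    linarith
  refine ⟨bell !![1, 0; 0, 1] _ ?_, bell !![1, 0; 0, -1] _ ?_, bell !![0, 1; 1, 0] _ ?_,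
    bell !![0, 1; -1, 0] _ ?_⟩
  all_goals
    simp [dotProduct, mulVec, Fintype.sum_prod_type, choiUnital, pauliX, pauliY, pauliZ,
      one_apply]
    ring

theorem unital_qubit_entanglement_breaking_iff_general (l1 l2 l3 : ℝ) :
    SeparableState (choiUnital l1 l2 l3) ↔ |l1| + |l2| + |l3| ≤ 1 := by
  refine ⟨fun hsep => ?_, separableState_choiUnital⟩
  have hPT := hsep.posSemidef_partialTranspose
  rw [partialTranspose_choiUnital] at hPT
  obtain ⟨h₁, h₂, h₃, h₄⟩ := choiUnital_posSemidef_bounds hsep.posSemidef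
  obtain ⟨h₅, h₆, h₇, h₈⟩ := choiUnital_posSemidef_bounds hPT
  rcases abs_cases l1 with ⟨e1, -⟩ | ⟨e1, -⟩ <;> rcases abs_cases l2 with ⟨e2, -⟩ | ⟨e2, -⟩ <;>
    rcases abs_cases l3 with ⟨e3, -⟩ | ⟨e3, -⟩ <;> rw [e1, e2, e3] <;> linarith

/-- A unital single-qubit channel with Bloch matrix
`Λ = diag(λ₁,λ₂,λ₃)` is entanglement-breaking (measure-and-prepare), i.e. its
Choi matrix is separable, if and only if `|λ₁| + |λ₂| + |λ₃| ≤ 1`. -/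
theorem unital_qubit_entanglement_breaking_iff (l1 l2 l3 : ℝ)
    (hchannel : (choiUnital l1 l2 l3).PosSemidef) :
    SeparableState (choiUnital l1 l2 l3) ↔ |l1| + |l2| + |l3| ≤ 1 :=
  unital_qubit_entanglement_breaking_iff_general l1 l2 l3
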